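/- arXiv:2107.02115 — 7 statements merged into one kernel-verified Lean document; each statement's English description precedes it below -/
import Mathlib

section
/- Let 𝒱₁ and 𝒱₂ be multivector fields on a finite abstract simplicial complex K with 𝒱₂ ⊑ 𝒱₁, and let N ⊆ K be closed. Let M₁ ⊆ N be a set that is isolated by N under 𝒱₁ in the path sense: every path under 𝒱₁ contained in N whose first and last simplices lie in M₁ has all of its simplices in M₁. Let M₂ ⊆ N be a set that is path-connected under 𝒱₂: for all σ, τ ∈ M₂ there is a path under 𝒱₂ contained in M₂ from σ to τ. If M₁ ∩ M₂ ≠ ∅, then M₂ ⊆ M₁. -/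
/-- A finite abstract simplicial complex: a finite family of nonempty finite
subsets (simplices) of a vertex type, closed under taking nonempty subsets. -/
structure SComplex (V : Type*) where
  carrier : Set (Finset V)
  finite : carrier.Finite
  nonempty_mem : ∀ σ ∈ carrier, σ.Nonempty
  down_closed : ∀ σ ∈ carrier, ∀ τ : Finset V, τ ⊆ σ → τ.Nonempty → τ ∈ carrier

namespace SComplex

variable {V : Type*}

/-- The closure of a set of simplices: all faces (in `K`) of its members. -/
def cl (K : SComplex V) (A : Set (Finset V)) : Set (Finset V) :=
  {σ ∈ K.carrier | ∃ τ ∈ A, σ ⊆ τ}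

/-- A set of simplices is closed if it equals its closure. -/
def Closed (K : SComplex V) (A : Set (Finset V)) : Prop :=
  K.cl A = A

/-- The mouth of a set of simplices: its closure minus itself. -/
def mo (K : SComplex V) (A : Set (Finset V)) : Set (Finset V) :=
  K.cl A \ A

/-- A set `A ⊆ K` is convex if `σ₁ ⊆ σ ⊆ σ₂` with `σ₁, σ₂ ∈ A`, `σ ∈ K`,
implies `σ ∈ A`. -/
def IsConvex (K : SComplex V) (A : Set (Finset V)) : Prop :=
  A ⊆ K.carrier ∧
    ∀ σ₁ ∈ A, ∀ σ₂ ∈ A, ∀ σ ∈ K.carrier, σ₁ ⊆ σ → σ ⊆ σ₂ → σ ∈ A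

end SComplex

/-- A multivector field on `K`: a partition of `K` into multivectors
(nonempty convex subsets of `K`). -/
structure MVF {V : Type*} (K : SComplex V) where
  vectors : Set (Set (Finset V))
  nonempty_mem : ∀ W ∈ vectors, W.Nonempty
  convex : ∀ W ∈ vectors, K.IsConvex W
  cover : ∀ σ ∈ K.carrier, ∃ W ∈ vectors, σ ∈ W
  eq_of_inter : ∀ W₁ ∈ vectors, ∀ W₂ ∈ vectors, (W₁ ∩ W₂).Nonempty → W₁ = W₂

variable {V : Type*}

/-- The dynamics `F(σ) = [σ] ∪ cl(σ)` associated with a family `vs` of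
multivectors: the union of the members of `vs` containing `σ` (for a partition,
this is the unique class `[σ]`), together with the closure of `σ`. -/
def Fdyn (K : SComplex V) (vs : Set (Set (Finset V))) (σ : Finset V) :
    Set (Finset V) :=
  (⋃₀ {W ∈ vs | σ ∈ W}) ∪ K.cl {σ}

/-- Extension of the dynamics to sets: `F(A) = ⋃_{σ ∈ A} F(σ)`. -/
def FdynSet (K : SComplex V) (vs : Set (Set (Finset V))) (A : Set (Finset V)) :
    Set (Finset V) :=
  ⋃ σ ∈ A, Fdyn K vs σ

/-- `ρ 0, ρ 1, …, ρ n` is a path under the family `vs`: each simplex lies in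
`K` and each successive simplex lies in the image of its predecessor under
the dynamics. -/
def IsPath (K : SComplex V) (vs : Set (Set (Finset V))) (n : ℕ)
    (ρ : ℕ → Finset V) : Prop :=
  (∀ i ≤ n, ρ i ∈ K.carrier) ∧
    ∀ i, 1 ≤ i → i ≤ n → ρ i ∈ Fdyn K vs (ρ (i - 1))

/-- `𝒱₁` refines `𝒱₂` (written `𝒱₁ ⊑ 𝒱₂`): every multivector of `𝒱₁` is
contained in some multivector of `𝒱₂`. -/
def Refines {K : SComplex V} (𝒱₁ 𝒱₂ : MVF K) : Prop :=
  ∀ W ∈ 𝒱₁.vectors, ∃ W' ∈ 𝒱₂.vectors, W ⊆ W'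

/-- The intersection field `𝒱₁ ⊓ 𝒱₂ = {V₁ ∩ V₂ : V₁ ∈ 𝒱₁, V₂ ∈ 𝒱₂} \ {∅}`. -/
def interField {K : SComplex V} (𝒱₁ 𝒱₂ : MVF K) : Set (Set (Finset V)) :=
  {A | (∃ W₁ ∈ 𝒱₁.vectors, ∃ W₂ ∈ 𝒱₂.vectors, A = W₁ ∩ W₂) ∧ A.Nonempty}

/-- A set is `𝒱`-compatible if it is a union of multivectors of `𝒱`. -/
def Compat {K : SComplex V} (𝒱 : MVF K) (S : Set (Finset V)) : Prop :=
  ∃ 𝒜 ⊆ 𝒱.vectors, S = ⋃₀ 𝒜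

/-- let `𝒱₂ ⊑ 𝒱₁`, `N` closed, `M₁ ⊆ N` isolated by `N` under
`𝒱₁` in the path sense, and `M₂ ⊆ N` path-connected under `𝒱₂`.  If
`M₁ ∩ M₂ ≠ ∅` then `M₂ ⊆ M₁`. -/
theorem stmt3 {V : Type*} {K : SComplex V} (𝒱₁ 𝒱₂ : MVF K)
    (href : Refines 𝒱₂ 𝒱₁)
    (N : Set (Finset V)) (hN : K.Closed N)
    (M₁ : Set (Finset V)) (hM₁N : M₁ ⊆ N)
    (hiso : ∀ (n : ℕ) (ρ : ℕ → Finset V), IsPath K 𝒱₁.vectors n ρ →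
      (∀ i ≤ n, ρ i ∈ N) → ρ 0 ∈ M₁ → ρ n ∈ M₁ → ∀ i ≤ n, ρ i ∈ M₁)
    (M₂ : Set (Finset V)) (hM₂N : M₂ ⊆ N)
    (hconn : ∀ σ ∈ M₂, ∀ τ ∈ M₂, ∃ (n : ℕ) (ρ : ℕ → Finset V),
      IsPath K 𝒱₂.vectors n ρ ∧ (∀ i ≤ n, ρ i ∈ M₂) ∧ ρ 0 = σ ∧ ρ n = τ)
    (hne : (M₁ ∩ M₂).Nonempty) :
    M₂ ⊆ M₁ := by
  obtain ⟨x, hx1, hx2⟩ := hne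
  intro τ hτ
  have hFdyn : ∀ σ, Fdyn K 𝒱₂.vectors σ ⊆ Fdyn K 𝒱₁.vectors σ := by
    intro σ y hy
    rcases hy with hy | hy
    · rcases hy with ⟨W, ⟨hW, hσW⟩, hyW⟩
      obtain ⟨W', hW', hWW'⟩ := href W hW
      exact Or.inl ⟨W', ⟨hW', hWW' hσW⟩, hWW' hyW⟩
    · exact Or.inr hy
  obtain ⟨n, ρ₁, hp1, hm1, h10, h1n⟩ := hconn x hx2 τ hτ
  obtain ⟨m, ρ₂, hp2, hm2, h20, h2m⟩ := hconn τ hτ x hx2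
  set ρ : ℕ → Finset V := fun j => if j ≤ n then ρ₁ j else ρ₂ (j - n) with hρ
  have hval : ∀ j ≤ n + m, ρ j ∈ M₂ := by
    intro j hj
    by_cases h : j ≤ n
    · simp only [hρ, if_pos h]; exact hm1 j h
    · simp only [hρ, if_neg h]
      exact hm2 (j - n) (by omega)
  have hpath : IsPath K 𝒱₁.vectors (n + m) ρ := by
    constructor
    · intro i hi
      by_cases h : i ≤ n
      · simp only [hρ, if_pos h]; exact hp1.1 i h
      · simp only [hρ, if_neg h]; exact hp2.1 (i - n) (by omega)
    · intro i hi1 hin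
      by_cases h : i ≤ n
      · have h' : i - 1 ≤ n := by omega
        simp only [hρ, if_pos h, if_pos h']
        exact hFdyn _ (hp1.2 i hi1 h)
      · by_cases h1 : i = n + 1
        · subst h1
          have hn1 : ¬ (n + 1 ≤ n) := by omega
          simp only [hρ, if_neg hn1, if_pos (le_refl n), Nat.add_sub_cancel_left,
            Nat.add_sub_cancel]
          have := hp2.2 1 le_rfl (by omega)
          simp only [Nat.sub_self] at this
          rw [h1n, ← h20]
          exact hFdyn _ this
        · have h' : ¬ (i - 1 ≤ n) := by omega
          simp only [hρ, if_neg h, if_neg h']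
          have := hp2.2 (i - n) (by omega) (by omega)
          have he : i - n - 1 = i - 1 - n := by omega
          rw [he] at this
          exact hFdyn _ this
  have hρ0 : ρ 0 ∈ M₁ := by
    simp only [hρ, if_pos (Nat.zero_le n), h10]; exact hx1
  have hρnm : ρ (n + m) ∈ M₁ := by
    by_cases h : n + m ≤ n
    · have hm0 : m = 0 := by omega
      subst hm0
      simp only [hρ, Nat.add_zero, if_pos (le_refl n), h1n, ← h20, h2m]
      exact hx1
    · simp only [hρ, if_neg h, Nat.add_sub_cancel_left, h2m]; exact hx1
  have := hiso (n + m) ρ hpath (fun i hi => hM₂N (hval i hi)) hρ0 hρnm n (by omega)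
  simpa only [hρ, if_pos (le_refl n), h1n] using this
end

section
/- Let V be a convex subset of a finite abstract simplicial complex K. Then the mouth mo(V) = cl(V) ∖ V is a closed subset of K. -/
variable {V : Type*}

/-- the mouth `mo(V) = cl(V) \ V` of a convex subset `V` of `K`
is a closed subset of `K`. -/
theorem stmt4 {V : Type*} (K : SComplex V) (A : Set (Finset V))
    (hconv : K.IsConvex A) :
    K.Closed (K.mo A) := by
  ext σ
  constructor
  · rintro ⟨hσK, τ, ⟨⟨hτK, ρ, hρA, hτρ⟩, hτnA⟩, hστ⟩
    refine ⟨⟨hσK, ρ, hρA, hστ.trans hτρ⟩, fun hσA => ?_⟩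
    exact hτnA (hconv.2 σ hσA ρ hρA τ hτK hστ hτρ)
  · rintro ⟨⟨hσK, hex⟩, hσnA⟩
    exact ⟨hσK, σ, ⟨⟨hσK, hex⟩, hσnA⟩, subset_rfl⟩
end

section
/- Let 𝒱 be a multivector field on a finite abstract simplicial complex K and let S ⊆ K be 𝒱-compatible. Suppose every path under 𝒱 contained in cl(S) whose first and last simplices lie in S has all of its simplices in S. Then: (i) mo(S) is closed; (ii) F_𝒱(mo(S)) ∩ cl(S) ⊆ mo(S); and (iii) F_𝒱(cl(S) ∖ mo(S)) ⊆ cl(S). (These are the combinatorial conditions making (cl(S), mo(S)) an index pair for S.) -/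
variable {V : Type*}

/-! A chain of faces `σ₁ ⊆ σ ⊆ σ₂` read downwards is a path under `𝒱`, so the path hypothesis
makes `S` convex, and the mouth of a convex set is closed. Since `S` is a union of multivectors,
a multivector meeting `S` lies in `S`; hence from `S` the map `F` leaves `S` only through faces,
which stay in `cl S`, and from the mouth it reaches only multivectors disjoint from `S` or faces,
which stay in the closed mouth. -/

namespace SComplex

variable (K : SComplex V) {A : Set (Finset V)}

theorem subset_cl (hA : A ⊆ K.carrier) : A ⊆ K.cl A :=
  fun σ hσ => ⟨hA hσ, σ, hσ, subset_rfl⟩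

theorem mo_subset_carrier : K.mo A ⊆ K.carrier :=
  fun _ hσ => hσ.1.1

theorem cl_diff_mo (hA : A ⊆ K.carrier) : K.cl A \ K.mo A = A := by
  rw [mo, Set.sdiff_sdiff_right_self, Set.inter_eq_right.2 (K.subset_cl hA)]

theorem closed_mo_of_isConvex (hA : K.IsConvex A) : K.Closed (K.mo A) := by
  refine Set.Subset.antisymm ?_ (K.subset_cl K.mo_subset_carrier)
  rintro σ ⟨hσK, τ, ⟨⟨hτK, τ', hτ'A, hττ'⟩, hτA⟩, hστ⟩
  exact ⟨⟨hσK, τ', hτ'A, hστ.trans hττ'⟩, fun hσA => hτA (hA.2 σ hσA τ' hτ'A τ hτK hστ hττ')⟩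

end SComplex

variable {K : SComplex V}

theorem mem_Fdyn {vs : Set (Set (Finset V))} {σ τ : Finset V} :
    τ ∈ Fdyn K vs σ ↔ (∃ W ∈ vs, σ ∈ W ∧ τ ∈ W) ∨ (τ ∈ K.carrier ∧ τ ⊆ σ) := by
  simp [Fdyn, SComplex.cl, and_assoc]

theorem mem_FdynSet {vs : Set (Set (Finset V))} {A : Set (Finset V)} {τ : Finset V} :
    τ ∈ FdynSet K vs A ↔ ∃ σ ∈ A, τ ∈ Fdyn K vs σ := by
  simp [FdynSet]

theorem isPath_of_antitone_faces {vs : Set (Set (Finset V))} {n : ℕ} {ρ : ℕ → Finset V}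
    (hK : ∀ i ≤ n, ρ i ∈ K.carrier) (hface : ∀ i, 1 ≤ i → i ≤ n → ρ i ⊆ ρ (i - 1)) :
    IsPath K vs n ρ :=
  ⟨hK, fun i h1 hn => mem_Fdyn.2 (Or.inr ⟨hK i hn, hface i h1 hn⟩)⟩

theorem isConvex_of_forall_isPath {vs : Set (Set (Finset V))} {S : Set (Finset V)}
    (hSK : S ⊆ K.carrier)
    (hiso : ∀ (n : ℕ) (ρ : ℕ → Finset V), IsPath K vs n ρ →
      (∀ i ≤ n, ρ i ∈ K.cl S) → ρ 0 ∈ S → ρ n ∈ S → ∀ i ≤ n, ρ i ∈ S) :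
    K.IsConvex S := by
  refine ⟨hSK, fun σ₁ hσ₁ σ₂ hσ₂ σ hσK h₁ h₂ => ?_⟩
  let ρ : ℕ → Finset V := fun i => if i = 0 then σ₂ else if i = 1 then σ else σ₁
  have hcl : ∀ i ≤ 2, ρ i ∈ K.cl S ∧ ρ i ⊆ σ₂ := by
    intro i hi
    interval_cases i
    · exact ⟨K.subset_cl hSK hσ₂, subset_rfl⟩
    · exact ⟨⟨hσK, σ₂, hσ₂, h₂⟩, h₂⟩
    · exact ⟨K.subset_cl hSK hσ₁, h₁.trans h₂⟩
  have hpath : IsPath K vs 2 ρ := by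
    refine isPath_of_antitone_faces (fun i hi => (hcl i hi).1.1) fun i h1 hi => ?_
    interval_cases i
    · exact h₂
    · exact h₁
  exact hiso 2 ρ hpath (fun i hi => (hcl i hi).1) hσ₂ hσ₁ 1 one_le_two

namespace Compat

variable {𝒱 : MVF K} {S : Set (Finset V)}

theorem subset_carrier (h : Compat 𝒱 S) : S ⊆ K.carrier := by
  obtain ⟨𝒜, h𝒜, rfl⟩ := h
  rintro σ ⟨W, hW, hσW⟩
  exact (𝒱.convex W (h𝒜 hW)).1 hσW

theorem mem_of_mem_vector (h : Compat 𝒱 S) {W : Set (Finset V)} (hW : W ∈ 𝒱.vectors)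
    {σ τ : Finset V} (hσW : σ ∈ W) (hτW : τ ∈ W) (hσS : σ ∈ S) : τ ∈ S := by
  obtain ⟨𝒜, h𝒜, rfl⟩ := h
  obtain ⟨A, hA, hσA⟩ := hσS
  obtain rfl := 𝒱.eq_of_inter W hW A (h𝒜 hA) ⟨σ, hσW, hσA⟩
  exact ⟨W, hA, hτW⟩

theorem FdynSet_mo_inter_cl_subset (h : Compat 𝒱 S) (hmo : K.Closed (K.mo S)) :
    FdynSet K 𝒱.vectors (K.mo S) ∩ K.cl S ⊆ K.mo S := by
  rintro τ ⟨hτ, hτcl⟩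
  obtain ⟨σ, hσ, hστ⟩ := mem_FdynSet.1 hτ
  rcases mem_Fdyn.1 hστ with ⟨W, hW, hσW, hτW⟩ | ⟨hτK, hτσ⟩
  · exact ⟨hτcl, fun hτS => hσ.2 (h.mem_of_mem_vector hW hτW hσW hτS)⟩
  · rw [← hmo]
    exact ⟨hτK, σ, hσ, hτσ⟩

theorem FdynSet_subset_cl (h : Compat 𝒱 S) : FdynSet K 𝒱.vectors S ⊆ K.cl S := by
  intro τ hτ
  obtain ⟨σ, hσS, hστ⟩ := mem_FdynSet.1 hτ
  rcases mem_Fdyn.1 hστ with ⟨W, hW, hσW, hτW⟩ | ⟨hτK, hτσ⟩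
  · exact K.subset_cl h.subset_carrier (h.mem_of_mem_vector hW hσW hτW hσS)
  · exact ⟨hτK, σ, hσS, hτσ⟩

end Compat

/-- if `S` is `𝒱`-compatible and every path under `𝒱` in
`cl(S)` with endpoints in `S` stays in `S`, then `mo(S)` is closed,
`F(mo(S)) ∩ cl(S) ⊆ mo(S)`, and `F(cl(S) \ mo(S)) ⊆ cl(S)`; i.e.,
`(cl(S), mo(S))` satisfies the combinatorial index-pair conditions. -/
theorem stmt5 {V : Type*} {K : SComplex V} (𝒱 : MVF K) (S : Set (Finset V))
    (hcompat : Compat 𝒱 S)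
    (hiso : ∀ (n : ℕ) (ρ : ℕ → Finset V), IsPath K 𝒱.vectors n ρ →
      (∀ i ≤ n, ρ i ∈ K.cl S) → ρ 0 ∈ S → ρ n ∈ S → ∀ i ≤ n, ρ i ∈ S) :
    K.Closed (K.mo S) ∧
    FdynSet K 𝒱.vectors (K.mo S) ∩ K.cl S ⊆ K.mo S ∧
    FdynSet K 𝒱.vectors (K.cl S \ K.mo S) ⊆ K.cl S := by
  have hSK := hcompat.subset_carrier
  have hmo := K.closed_mo_of_isConvex (isConvex_of_forall_isPath hSK hiso)
  refine ⟨hmo, hcompat.FdynSet_mo_inter_cl_subset hmo, ?_⟩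
  rw [K.cl_diff_mo hSK]
  exact hcompat.FdynSet_subset_cl
end

section
/- Let 𝒱₁ and 𝒱₂ be multivector fields on a finite abstract simplicial complex K and let N ⊆ K be closed. For k = 1, 2, let E_k ⊆ P_k ⊆ N be closed sets satisfying F_{𝒱_k}(E_k) ∩ N ⊆ E_k, F_{𝒱_k}(P_k) ∩ N ⊆ P_k, and F_{𝒱_k}(P_k ∖ E_k) ⊆ N. Then P₁ ∩ P₂ and E₁ ∩ E₂ are closed, E₁ ∩ E₂ ⊆ P₁ ∩ P₂ ⊆ N, and, writing F for the dynamics of the intersection field 𝒱₁ ⊓ 𝒱₂: F(E₁ ∩ E₂) ∩ N ⊆ E₁ ∩ E₂, F(P₁ ∩ P₂) ∩ N ⊆ P₁ ∩ P₂, and F((P₁ ∩ P₂) ∖ (E₁ ∩ E₂)) ⊆ N. (This is the combinatorial content of the statement that intersections of index pairs in N are index pairs in N under the intersection field.) -/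
variable {V : Type*}

lemma Fdyn_inter_subset_left {V : Type*} {K : SComplex V} (𝒱₁ 𝒱₂ : MVF K)
    (σ : Finset V) :
    Fdyn K (interField 𝒱₁ 𝒱₂) σ ⊆ Fdyn K 𝒱₁.vectors σ := by
  intro x hx
  rcases hx with hx | hx
  · rcases hx with ⟨W, ⟨⟨⟨W₁, hW₁, W₂, hW₂, rfl⟩, -⟩, hσ⟩, hxW⟩
    exact Or.inl ⟨W₁, ⟨hW₁, hσ.1⟩, hxW.1⟩
  · exact Or.inr hx

lemma Fdyn_inter_subset_right {V : Type*} {K : SComplex V} (𝒱₁ 𝒱₂ : MVF K)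
    (σ : Finset V) :
    Fdyn K (interField 𝒱₁ 𝒱₂) σ ⊆ Fdyn K 𝒱₂.vectors σ := by
  intro x hx
  rcases hx with hx | hx
  · rcases hx with ⟨W, ⟨⟨⟨W₁, hW₁, W₂, hW₂, rfl⟩, -⟩, hσ⟩, hxW⟩
    exact Or.inl ⟨W₂, ⟨hW₂, hσ.2⟩, hxW.2⟩
  · exact Or.inr hx

lemma Closed.inter' {V : Type*} {K : SComplex V} {A B : Set (Finset V)}
    (hA : K.Closed A) (hB : K.Closed B) : K.Closed (A ∩ B) := by
  apply Set.eq_of_subset_of_subset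
  · rintro σ ⟨hσK, τ, ⟨hτA, hτB⟩, hst⟩
    constructor
    · rw [← hA]; exact ⟨hσK, τ, hτA, hst⟩
    · rw [← hB]; exact ⟨hσK, τ, hτB, hst⟩
  · intro σ hσ
    have hσK : σ ∈ K.carrier := by rw [← hA] at hσ; exact hσ.1.1
    exact ⟨hσK, σ, hσ, subset_rfl⟩

/-- intersections of index pairs in `N` are index pairs in `N`
under the intersection field `𝒱₁ ⊓ 𝒱₂`. -/
theorem stmt7 {V : Type*} {K : SComplex V} (𝒱₁ 𝒱₂ : MVF K)
    (N P₁ E₁ P₂ E₂ : Set (Finset V)) (hN : K.Closed N)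
    (hP₁ : K.Closed P₁) (hE₁ : K.Closed E₁)
    (hE₁P₁ : E₁ ⊆ P₁) (hP₁N : P₁ ⊆ N)
    (h11 : FdynSet K 𝒱₁.vectors E₁ ∩ N ⊆ E₁)
    (h12 : FdynSet K 𝒱₁.vectors P₁ ∩ N ⊆ P₁)
    (h13 : FdynSet K 𝒱₁.vectors (P₁ \ E₁) ⊆ N)
    (hP₂ : K.Closed P₂) (hE₂ : K.Closed E₂)
    (hE₂P₂ : E₂ ⊆ P₂) (hP₂N : P₂ ⊆ N)
    (h21 : FdynSet K 𝒱₂.vectors E₂ ∩ N ⊆ E₂)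
    (h22 : FdynSet K 𝒱₂.vectors P₂ ∩ N ⊆ P₂)
    (h23 : FdynSet K 𝒱₂.vectors (P₂ \ E₂) ⊆ N) :
    K.Closed (P₁ ∩ P₂) ∧ K.Closed (E₁ ∩ E₂) ∧
    E₁ ∩ E₂ ⊆ P₁ ∩ P₂ ∧ P₁ ∩ P₂ ⊆ N ∧
    FdynSet K (interField 𝒱₁ 𝒱₂) (E₁ ∩ E₂) ∩ N ⊆ E₁ ∩ E₂ ∧
    FdynSet K (interField 𝒱₁ 𝒱₂) (P₁ ∩ P₂) ∩ N ⊆ P₁ ∩ P₂ ∧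
    FdynSet K (interField 𝒱₁ 𝒱₂) ((P₁ ∩ P₂) \ (E₁ ∩ E₂)) ⊆ N := by
  have key1 : ∀ A, FdynSet K (interField 𝒱₁ 𝒱₂) A ⊆ FdynSet K 𝒱₁.vectors A := by
    intro A x hx
    rcases Set.mem_iUnion₂.1 hx with ⟨σ, hσ, hxσ⟩
    exact Set.mem_iUnion₂.2 ⟨σ, hσ, Fdyn_inter_subset_left 𝒱₁ 𝒱₂ σ hxσ⟩
  have key2 : ∀ A, FdynSet K (interField 𝒱₁ 𝒱₂) A ⊆ FdynSet K 𝒱₂.vectors A := by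
    intro A x hx
    rcases Set.mem_iUnion₂.1 hx with ⟨σ, hσ, hxσ⟩
    exact Set.mem_iUnion₂.2 ⟨σ, hσ, Fdyn_inter_subset_right 𝒱₁ 𝒱₂ σ hxσ⟩
  have mono1 : ∀ A B : Set (Finset V), A ⊆ B →
      FdynSet K 𝒱₁.vectors A ⊆ FdynSet K 𝒱₁.vectors B := by
    intro A B hAB x hx
    rcases Set.mem_iUnion₂.1 hx with ⟨σ, hσ, hxσ⟩
    exact Set.mem_iUnion₂.2 ⟨σ, hAB hσ, hxσ⟩
  have mono2 : ∀ A B : Set (Finset V), A ⊆ B →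
      FdynSet K 𝒱₂.vectors A ⊆ FdynSet K 𝒱₂.vectors B := by
    intro A B hAB x hx
    rcases Set.mem_iUnion₂.1 hx with ⟨σ, hσ, hxσ⟩
    exact Set.mem_iUnion₂.2 ⟨σ, hAB hσ, hxσ⟩
  refine ⟨Closed.inter' hP₁ hP₂, Closed.inter' hE₁ hE₂,
    Set.inter_subset_inter hE₁P₁ hE₂P₂, fun σ hσ => hP₁N hσ.1, ?_, ?_, ?_⟩
  · rintro x ⟨hx, hxN⟩
    exact ⟨h11 ⟨mono1 _ _ Set.inter_subset_left (key1 _ hx), hxN⟩,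
      h21 ⟨mono2 _ _ Set.inter_subset_right (key2 _ hx), hxN⟩⟩
  · rintro x ⟨hx, hxN⟩
    exact ⟨h12 ⟨mono1 _ _ Set.inter_subset_left (key1 _ hx), hxN⟩,
      h22 ⟨mono2 _ _ Set.inter_subset_right (key2 _ hx), hxN⟩⟩
  · intro x hx
    rcases Set.mem_iUnion₂.1 hx with ⟨σ, ⟨⟨hσP₁, hσP₂⟩, hσE⟩, hxσ⟩
    by_cases h1 : σ ∈ E₁
    · have h2 : σ ∉ E₂ := fun h2 => hσE ⟨h1, h2⟩
      exact h23 (Set.mem_iUnion₂.2 ⟨σ, ⟨hσP₂, h2⟩,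
        Fdyn_inter_subset_right 𝒱₁ 𝒱₂ σ hxσ⟩)
    · exact h13 (Set.mem_iUnion₂.2 ⟨σ, ⟨hσP₁, h1⟩,
        Fdyn_inter_subset_left 𝒱₁ 𝒱₂ σ hxσ⟩)
end

section
/- Let 𝒱 be a multivector field on a finite abstract simplicial complex K, let N ⊆ K be closed, and let A ⊆ N. Define the push-forward pf_N(A) as the set of simplices τ ∈ N for which there exists a path under 𝒱 contained in N whose first simplex lies in A and whose last simplex is τ. Then A ⊆ pf_N(A), pf_N(A) is closed, and F_𝒱(pf_N(A)) ∩ N ⊆ pf_N(A). -/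
variable {V : Type*}

/-- The push-forward `pf_N(A)`: all simplices of `N` reachable from `A` by a
path under `𝒱` contained in `N`. -/
def pushForward {V : Type*} (K : SComplex V)
    (vs : Set (Set (Finset V))) (N A : Set (Finset V)) : Set (Finset V) :=
  {τ ∈ N | ∃ (n : ℕ) (ρ : ℕ → Finset V), IsPath K vs n ρ ∧
    (∀ i ≤ n, ρ i ∈ N) ∧ ρ 0 ∈ A ∧ ρ n = τ}

lemma path_extend {V : Type*} (K : SComplex V) (vs : Set (Set (Finset V)))
    (n : ℕ) (ρ : ℕ → Finset V) (h : IsPath K vs n ρ) (τ : Finset V)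
    (hτK : τ ∈ K.carrier) (hστ : τ ∈ Fdyn K vs (ρ n)) :
    IsPath K vs (n + 1) (fun i => if i ≤ n then ρ i else τ) := by
  obtain ⟨h1, h2⟩ := h
  constructor
  · intro i hi
    by_cases hin : i ≤ n <;> simp [hin]
    · exact h1 i hin
    · exact hτK
  · intro i hi1 hi2
    by_cases hin : i ≤ n
    · have : i - 1 ≤ n := le_trans (Nat.sub_le i 1) hin
      simp only [hin, this, if_true]
      exact h2 i hi1 hin
    · have hieq : i = n + 1 := le_antisymm hi2 (Nat.not_le.mp hin)
      have : i - 1 = n := by omega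
      simp only [hin, if_false, this, le_refl, if_true]
      exact hστ

/-- for `N` closed and `A ⊆ N`, the push-forward `pf_N(A)`
contains `A`, is closed, and satisfies `F(pf_N(A)) ∩ N ⊆ pf_N(A)`. -/
theorem stmt8 {V : Type*} {K : SComplex V} (𝒱 : MVF K)
    (N A : Set (Finset V)) (hN : K.Closed N) (hAN : A ⊆ N) :
    A ⊆ pushForward K 𝒱.vectors N A ∧
    K.Closed (pushForward K 𝒱.vectors N A) ∧
    FdynSet K 𝒱.vectors (pushForward K 𝒱.vectors N A) ∩ N ⊆
      pushForward K 𝒱.vectors N A := by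
  have hNK : N ⊆ K.carrier := by
    intro σ hσ; rw [← hN] at hσ; exact hσ.1
  have hsub : A ⊆ pushForward K 𝒱.vectors N A := by
    intro σ hσ
    refine ⟨hAN hσ, 0, fun _ => σ, ⟨fun i hi => ?_, fun i h1 h2 => by omega⟩,
      fun i hi => hAN hσ, hσ, rfl⟩
    exact hNK (hAN hσ)
  refine ⟨hsub, ?_, ?_⟩
  · -- closedness
    apply Set.Subset.antisymm
    · rintro σ ⟨hσK, τ, ⟨hτN, n, ρ, hρ, hρN, hρ0, hρn⟩, hστ⟩
      have hσN : σ ∈ N := by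
        rw [← hN]; exact ⟨hσK, τ, hτN, hστ⟩
      refine ⟨hσN, n + 1, fun i => if i ≤ n then ρ i else σ,
        path_extend K _ n ρ hρ σ hσK ?_, ?_, ?_, ?_⟩
      · exact Or.inr ⟨hσK, ρ n, rfl, hρn ▸ hστ⟩
      · intro i _
        by_cases hin : i ≤ n <;> simp [hin]
        · exact hρN i hin
        · exact hσN
      · simpa using hρ0
      · simp
    · intro σ hσ
      exact ⟨hNK hσ.1, σ, hσ, subset_rfl⟩
  · -- F(pf) ∩ N ⊆ pf
    rintro τ ⟨hτF, hτN⟩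
    simp only [FdynSet, Set.mem_iUnion] at hτF
    obtain ⟨σ, ⟨hσN, n, ρ, hρ, hρN, hρ0, hρn⟩, hτ⟩ := hτF
    refine ⟨hτN, n + 1, fun i => if i ≤ n then ρ i else τ,
      path_extend K _ n ρ hρ τ (hNK hτN) (hρn ▸ hτ), ?_, ?_, ?_⟩
    · intro i _
      by_cases hin : i ≤ n <;> simp [hin]
      · exact hρN i hin
      · exact hτN
    · simpa using hρ0
    · simp
end

section
/- Let 𝒱 be a multivector field on a finite abstract simplicial complex K, let N ⊆ K be closed, and let E ⊆ P ⊆ N be closed sets satisfying F_𝒱(E) ∩ N ⊆ E, F_𝒱(P) ∩ N ⊆ P, and F_𝒱(P ∖ E) ⊆ N. Let A ⊆ K be a 𝒱-compatible set with A ⊆ N, A ∩ E = ∅, and mo(A) ⊆ P. Then P ∪ A is closed, E ⊆ P ∪ A ⊆ N, and the pair (P ∪ A, E) again satisfies F_𝒱(E) ∩ N ⊆ E, F_𝒱(P ∪ A) ∩ N ⊆ P ∪ A, and F_𝒱((P ∪ A) ∖ E) ⊆ N. -/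
variable {V : Type*}

/-- thickening an index pair in `N` by a `𝒱`-compatible set
`A ⊆ N` with `A ∩ E = ∅` and `mo(A) ⊆ P` yields again an index pair
`(P ∪ A, E)` in `N`. -/
theorem stmt10 {V : Type*} {K : SComplex V} (𝒱 : MVF K)
    (N P E A : Set (Finset V))
    (hN : K.Closed N) (hP : K.Closed P) (hE : K.Closed E)
    (hEP : E ⊆ P) (hPN : P ⊆ N)
    (h1 : FdynSet K 𝒱.vectors E ∩ N ⊆ E)
    (h2 : FdynSet K 𝒱.vectors P ∩ N ⊆ P)
    (h3 : FdynSet K 𝒱.vectors (P \ E) ⊆ N)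
    (hcompat : Compat 𝒱 A) (hAN : A ⊆ N) (hAE : A ∩ E = ∅)
    (hmoA : K.mo A ⊆ P) :
    K.Closed (P ∪ A) ∧ E ⊆ P ∪ A ∧ P ∪ A ⊆ N ∧
    FdynSet K 𝒱.vectors E ∩ N ⊆ E ∧
    FdynSet K 𝒱.vectors (P ∪ A) ∩ N ⊆ P ∪ A ∧
    FdynSet K 𝒱.vectors ((P ∪ A) \ E) ⊆ N := by

  have hNK : N ⊆ K.carrier := by
    rw [← hN]; intro σ hσ; exact hσ.1
  have hclA : K.cl A ⊆ P ∪ A := by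
    intro σ hσ
    by_cases h : σ ∈ A
    · exact Or.inr h
    · exact Or.inl (hmoA ⟨hσ, h⟩)
  have hPA_closed : K.Closed (P ∪ A) := by
    apply Set.Subset.antisymm
    · rintro σ ⟨hσK, τ, hτ, hsub⟩
      cases hτ with
      | inl h => exact Or.inl (by rw [← hP]; exact ⟨hσK, τ, h, hsub⟩)
      | inr h => exact hclA ⟨hσK, τ, h, hsub⟩
    · intro σ hσ
      refine ⟨?_, σ, hσ, subset_rfl⟩
      cases hσ with
      | inl h => exact hNK (hPN h)
      | inr h => exact hNK (hAN h)
  obtain ⟨𝒜, h𝒜, hAeq⟩ := hcompat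
  have hFA : ∀ σ ∈ A, Fdyn K 𝒱.vectors σ ⊆ P ∪ A := by
    intro σ hσ τ hτ
    cases hτ with
    | inl h =>
      obtain ⟨W, ⟨hWv, hσW⟩, hτW⟩ := h
      have hσ' : σ ∈ ⋃₀ 𝒜 := hAeq ▸ hσ
      obtain ⟨W₀, hW₀, hσW₀⟩ := hσ'
      have hWW : W = W₀ := 𝒱.eq_of_inter W hWv W₀ (h𝒜 hW₀) ⟨σ, hσW, hσW₀⟩
      right; rw [hAeq]; exact ⟨W₀, hW₀, hWW ▸ hτW⟩
    | inr h =>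
      obtain ⟨hτK, ρ, hρ, hsub⟩ := h
      simp only [Set.mem_singleton_iff] at hρ
      exact hclA ⟨hτK, σ, hσ, hρ ▸ hsub⟩
  refine ⟨hPA_closed, fun σ h => Or.inl (hEP h), ?_, h1, ?_, ?_⟩
  · intro σ h
    cases h with
    | inl h => exact hPN h
    | inr h => exact hAN h
  · rintro σ ⟨hσF, hσN⟩
    simp only [FdynSet, Set.mem_iUnion] at hσF
    obtain ⟨τ, hτ, hF⟩ := hσF
    cases hτ with
    | inl h =>
      exact Or.inl (h2 ⟨Set.mem_iUnion₂.mpr ⟨τ, h, hF⟩, hσN⟩)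
    | inr h => exact hFA τ h hF
  · intro σ hσF
    simp only [FdynSet, Set.mem_iUnion] at hσF
    obtain ⟨τ, hτ, hF⟩ := hσF
    obtain ⟨hτPA, hτE⟩ := hτ
    cases hτPA with
    | inl h => exact h3 (Set.mem_iUnion₂.mpr ⟨τ, ⟨h, hτE⟩, hF⟩)
    | inr h =>
      cases hFA τ h hF with
      | inl h' => exact hPN h'
      | inr h' => exact hAN h'
end

section
/- Let 𝒱 be a multivector field on a finite abstract simplicial complex K, let N ⊆ K be closed, and let E ⊆ Q ⊆ N be closed sets satisfying F_𝒱(E) ∩ N ⊆ E and F_𝒱(Q) ∩ N ⊆ Q. Let M ⊆ N be a set that is path-connected under 𝒱: for all σ, τ ∈ M there is a path under 𝒱 contained in M from σ to τ. If M ∩ (Q ∖ E) ≠ ∅, then M ⊆ Q ∖ E. -/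
variable {V : Type*}

/-- let `E ⊆ Q ⊆ N` be closed with `F(E) ∩ N ⊆ E` and
`F(Q) ∩ N ⊆ Q`, and let `M ⊆ N` be path-connected under `𝒱`.  If
`M ∩ (Q \ E) ≠ ∅` then `M ⊆ Q \ E`. -/
theorem stmt11 {V : Type*} {K : SComplex V} (𝒱 : MVF K)
    (N Q E : Set (Finset V))
    (hN : K.Closed N) (hQ : K.Closed Q) (hE : K.Closed E)
    (hEQ : E ⊆ Q) (hQN : Q ⊆ N)
    (h1 : FdynSet K 𝒱.vectors E ∩ N ⊆ E)
    (h2 : FdynSet K 𝒱.vectors Q ∩ N ⊆ Q)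
    (M : Set (Finset V)) (hMN : M ⊆ N)
    (hconn : ∀ σ ∈ M, ∀ τ ∈ M, ∃ (n : ℕ) (ρ : ℕ → Finset V),
      IsPath K 𝒱.vectors n ρ ∧ (∀ i ≤ n, ρ i ∈ M) ∧ ρ 0 = σ ∧ ρ n = τ)
    (hne : (M ∩ (Q \ E)).Nonempty) :
    M ⊆ Q \ E := by
  obtain ⟨σ₀, hσ₀M, hσ₀Q, hσ₀E⟩ := hne
  -- forward invariance along paths in M
  have fwd : ∀ (S : Set (Finset V)), FdynSet K 𝒱.vectors S ∩ N ⊆ S →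
      ∀ (n : ℕ) (ρ : ℕ → Finset V), IsPath K 𝒱.vectors n ρ →
      (∀ i ≤ n, ρ i ∈ M) → ρ 0 ∈ S → ∀ i ≤ n, ρ i ∈ S := by
    intro S hS n ρ hpath hM h0 i
    induction i with
    | zero => intro _; exact h0
    | succ j ih =>
      intro hjn
      have hj : ρ j ∈ S := ih (Nat.le_of_succ_le hjn)
      have hstep : ρ (j+1) ∈ Fdyn K 𝒱.vectors (ρ j) := by
        have := hpath.2 (j+1) (Nat.succ_le_succ (Nat.zero_le j)) hjn
        simpa using this
      have : ρ (j+1) ∈ FdynSet K 𝒱.vectors S := by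
        exact Set.mem_biUnion hj hstep
      exact hS ⟨this, hMN (hM (j+1) hjn)⟩
  intro τ hτM
  constructor
  · obtain ⟨n, ρ, hpath, hρM, h0, hn⟩ := hconn σ₀ hσ₀M τ hτM
    have := fwd Q h2 n ρ hpath hρM (h0 ▸ hσ₀Q) n le_rfl
    rwa [hn] at this
  · intro hτE
    obtain ⟨n, ρ, hpath, hρM, h0, hn⟩ := hconn τ hτM σ₀ hσ₀M
    exact hσ₀E (hn ▸ fwd E h1 n ρ hpath hρM (h0 ▸ hτE) n le_rfl)
end
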